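/- Let (X_k)_{k≥0} and (Y_k)_{k≥0} be sequences in O^{n,p}_+ such that lim_{k→∞} (‖Y_k − X_k‖_F² + ‖X_{k+1} − Y_k‖_F²) = 0 and such that, for every k and every row index i, if both the i-th row of X_k and the i-th row of Y_k are nonzero then their (unique) nonzero entries lie in the same column. Then for each row index i ∈ {1,…,n}, at least one of the following holds: (i) there exist K ∈ ℕ and a column index j such that for all k ≥ K, [X_k]_{i,l} = 0 for every l ≠ j; (ii) liminf_{k→∞} ‖[X_k]_{i,:}‖₂ = 0. -/

import Mathlib

/-!
A nonnegative matrix with orthonormal columns has at most one nonzero entry per row, so the norm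
of a row is the absolute value of that entry. If the liminf of `‖[X_k]_{i,:}‖₂` is positive, then
eventually these norms exceed some `ε > 0` while `‖X_{k+1} - Y_k‖_F < ε`. Were the support of row
`i` to jump from column `j` of `X_k` to a column `l ≠ j` of `X_{k+1}`, alignment would force
`[Y_k]_{i,l} = 0`, whence `‖[X_{k+1}]_{i,:}‖₂ = |[X_{k+1} - Y_k]_{i,l}| ≤ ‖X_{k+1} - Y_k‖_F < ε`.
So the support column is eventually fixed.
-/

open Matrix

/-- Frobenius norm of a real matrix. -/
noncomputable def fnorm {n p : ℕ} (A : Matrix (Fin n) (Fin p) ℝ) : ℝ :=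
  Real.sqrt (∑ i, ∑ j, (A i j) ^ 2)

open Filter

namespace Matrix

variable {m n R : Type*} [Fintype m] [DecidableEq n] [Semiring R] [PartialOrder R]
  [IsOrderedRing R] [NoZeroDivisors R]

theorem eq_of_apply_ne_zero_of_transpose_mul_self_eq_one {X : Matrix m n R} (h1 : Xᵀ * X = 1)
    (h0 : ∀ i j, 0 ≤ X i j) {i : m} {j j' : n} (hj : X i j ≠ 0) (hj' : X i j' ≠ 0) :
    j = j' := by
  by_contra hne
  have horth : ∑ k, X k j * X k j' = 0 := by
    simpa [Matrix.mul_apply, Matrix.one_apply, hne] using congrFun (congrFun h1 j) j'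
  have hij : X i j * X i j' = 0 :=
    (Finset.sum_eq_zero_iff_of_nonneg fun k _ => mul_nonneg (h0 k j) (h0 k j')).1 horth i
      (Finset.mem_univ i)
  exact mul_ne_zero hj hj' hij

theorem apply_eq_zero_of_transpose_mul_self_eq_one {X : Matrix m n R} (h1 : Xᵀ * X = 1)
    (h0 : ∀ i j, 0 ≤ X i j) {i : m} {j l : n} (hj : X i j ≠ 0) (hl : l ≠ j) : X i l = 0 := by
  by_contra hl'
  exact hl (eq_of_apply_ne_zero_of_transpose_mul_self_eq_one h1 h0 hl' hj)

end Matrix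

theorem Real.exists_pos_eventually_lt_of_liminf_ne_zero {ι : Type*} {f : Filter ι} {u : ι → ℝ}
    (hu : ∀ᶠ i in f, 0 ≤ u i) (h : liminf u f ≠ 0) : ∃ ε > 0, ∀ᶠ i in f, ε < u i := by
  have hcobdd : f.IsCoboundedUnder (· ≥ ·) u :=
    by_contra fun hc => h (Real.liminf_of_not_isCoboundedUnder hc)
  have hpos : 0 < liminf u f := (le_liminf_of_le hcobdd hu).lt_of_ne' h
  exact ⟨_, half_pos hpos,
    eventually_lt_of_lt_liminf (half_lt_self hpos) (isBoundedUnder_of_eventually_ge hu)⟩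

section Frobenius

variable {n p : ℕ}

theorem abs_apply_le_fnorm (A : Matrix (Fin n) (Fin p) ℝ) (i : Fin n) (j : Fin p) :
    |A i j| ≤ fnorm A := by
  rw [← Real.sqrt_sq_eq_abs, fnorm]
  gcongr
  calc A i j ^ 2 ≤ ∑ l, A i l ^ 2 :=
        Finset.single_le_sum (fun l _ => sq_nonneg (A i l)) (Finset.mem_univ j)
    _ ≤ ∑ k, ∑ l, A k l ^ 2 :=
        Finset.single_le_sum (f := fun k => ∑ l, A k l ^ 2)
          (fun k _ => Finset.sum_nonneg fun l _ => sq_nonneg (A k l)) (Finset.mem_univ i)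

theorem sqrt_sum_sq_row_le_fnorm_sub {X Y : Matrix (Fin n) (Fin p) ℝ} (h1 : Xᵀ * X = 1)
    (h0 : ∀ i j, 0 ≤ X i j) {i : Fin n} {l : Fin p} (hX : X i l ≠ 0) (hY : Y i l = 0) :
    √(∑ j, X i j ^ 2) ≤ fnorm (X - Y) := by
  have hrow : ∑ j, X i j ^ 2 = X i l ^ 2 :=
    Finset.sum_eq_single l
      (fun j _ hj => by rw [apply_eq_zero_of_transpose_mul_self_eq_one h1 h0 hX hj, sq, zero_mul])
      fun h => (h (Finset.mem_univ l)).elim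
  calc √(∑ j, X i j ^ 2) = |(X - Y) i l| := by
        rw [hrow, Real.sqrt_sq_eq_abs, Matrix.sub_apply, hY, sub_zero]
    _ ≤ fnorm (X - Y) := abs_apply_le_fnorm _ i l

end Frobenius

theorem finite_support_identification_general
    {n p : ℕ}
    (X Y : ℕ → Matrix (Fin n) (Fin p) ℝ)
    (hXf : ∀ k, (X k)ᵀ * X k = 1 ∧ ∀ i j, 0 ≤ X k i j)
    (hlim : Filter.Tendsto
        (fun k => fnorm (Y k - X k) ^ 2 + fnorm (X (k + 1) - Y k) ^ 2)
        Filter.atTop (nhds 0))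
    (halign : ∀ k, ∀ i : Fin n, ∀ j j' : Fin p,
        X k i j ≠ 0 → Y k i j' ≠ 0 → j = j') :
    ∀ i : Fin n,
      (∃ K : ℕ, ∃ j : Fin p, ∀ k, K ≤ k → ∀ l : Fin p, l ≠ j → X k i l = 0) ∨
      Filter.liminf (fun k => Real.sqrt (∑ j, (X k i j) ^ 2)) Filter.atTop = 0 := by
  intro i
  refine or_iff_not_imp_right.2 fun hliminf => ?_
  obtain ⟨ε, hε, hrow_large⟩ := Real.exists_pos_eventually_lt_of_liminf_ne_zero
    (.of_forall fun k => Real.sqrt_nonneg _) hliminf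
  have hstep_small : ∀ᶠ k in atTop, fnorm (X (k + 1) - Y k) < ε :=
    (hlim.eventually (gt_mem_nhds (pow_pos hε 2))).mono fun k hk =>
      lt_of_pow_lt_pow_left₀ 2 hε.le (by linarith [sq_nonneg (fnorm (Y k - X k))])
  obtain ⟨K, hK⟩ := (hrow_large.and hstep_small).exists_forall_of_atTop
  have hrow_ne : ∀ k ≥ K, ∃ j, X k i j ≠ 0 := fun k hk => by
    by_contra! hzero
    exact (hε.trans (hK k hk).1).ne' (by simp [hzero])
  have hkeep : ∀ k ≥ K, ∀ j, X k i j ≠ 0 → X (k + 1) i j ≠ 0 := by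
    intro k hk j hj
    obtain ⟨l, hl⟩ := hrow_ne (k + 1) (by omega)
    obtain rfl | hlj := eq_or_ne l j
    · exact hl
    have hY : Y k i l = 0 := by_contra fun hY => hlj (halign k i j l hj hY).symm
    have hjump := sqrt_sum_sq_row_le_fnorm_sub (hXf (k + 1)).1 (hXf (k + 1)).2 hl hY
    linarith [(hK (k + 1) (by omega)).1, (hK k hk).2]
  obtain ⟨j, hj⟩ := hrow_ne K le_rfl
  refine ⟨K, j, fun k hk l hl => ?_⟩
  have hkj : X k i j ≠ 0 := Nat.le_induction hj (fun k hk => hkeep k hk j) k hk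
  exact apply_eq_zero_of_transpose_mul_self_eq_one (hXf k).1 (hXf k).2 hkj hl

/-- Theorem `thm:support`, finite support identification: if the
successive distances tend to zero and, for every `k` and every row `i`, the
nonzero entries of the `i`-th rows of `X_k` and `Y_k` (when both rows are
nonzero) lie in the same column, then for each row `i` either the position of
the nonzero entry in `[X_k]_{i,:}` is eventually fixed, or
`liminf_{k→∞} ‖[X_k]_{i,:}‖₂ = 0`. -/
theorem finite_support_identification
    {n p : ℕ}
    (X Y : ℕ → Matrix (Fin n) (Fin p) ℝ)
    (hXf : ∀ k, (X k)ᵀ * X k = 1 ∧ ∀ i j, 0 ≤ X k i j)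
    (hYf : ∀ k, (Y k)ᵀ * Y k = 1 ∧ ∀ i j, 0 ≤ Y k i j)
    (hlim : Filter.Tendsto
        (fun k => fnorm (Y k - X k) ^ 2 + fnorm (X (k + 1) - Y k) ^ 2)
        Filter.atTop (nhds 0))
    (halign : ∀ k, ∀ i : Fin n, ∀ j j' : Fin p,
        X k i j ≠ 0 → Y k i j' ≠ 0 → j = j') :
    ∀ i : Fin n,
      (∃ K : ℕ, ∃ j : Fin p, ∀ k, K ≤ k → ∀ l : Fin p, l ≠ j → X k i l = 0) ∨
      Filter.liminf (fun k => Real.sqrt (∑ j, (X k i j) ^ 2)) Filter.atTop = 0 :=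
  finite_support_identification_general X Y hXf hlim halign
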